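/- For every even integer m ≥ 4, the graph obtained from the cycle C_m by adding two new vertices x and y, with x and y nonadjacent to each other and each adjacent to all m cycle vertices, is a Hamiltonian, Eulerian (all degrees even) graph on m + 2 vertices with exactly 3m = 3(m+2) − 6 edges that is triangle decomposable. -/

import Mathlib

/-- A triangle on three distinct vertices, as a multiset of edges. -/
def IsTriangle {V : Type*} (t : Multiset (Sym2 V)) : Prop :=
  ∃ a b c : V, a ≠ b ∧ b ≠ c ∧ a ≠ c ∧ t = {s(a, b), s(b, c), s(a, c)}

/-- A multigraph (multiset of edges) is triangle decomposable if it is a sum of triangles. -/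
def TriDecomp {V : Type*} (E : Multiset (Sym2 V)) : Prop :=
  ∃ T : Multiset (Multiset (Sym2 V)), (∀ t ∈ T, IsTriangle t) ∧ T.sum = E

/-- The edge multiset of a simple graph on a finite vertex type. -/
noncomputable def edgeMS {V : Type*} [Fintype V] (G : SimpleGraph V) : Multiset (Sym2 V) :=
  G.edgeSet.toFinite.toFinset.val

/-- `ε_Δ(G)`: the least number of duplicated edges of `G` (a multiset of edges of `G`,
repetitions allowed) whose addition makes the edge multiset triangle decomposable. -/
noncomputable def epsDelta {V : Type*} [Fintype V] (G : SimpleGraph V) : ℕ :=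
  sInf {k | ∃ D : Multiset (Sym2 V), D.card = k ∧ (∀ e ∈ D, e ∈ G.edgeSet) ∧
    TriDecomp (edgeMS G + D)}

/-- The cyclic successor on `Fin m`. -/
def nextFin {m : ℕ} (hm : 0 < m) (i : Fin m) : Fin m :=
  ⟨((i : ℕ) + 1) % m, Nat.mod_lt _ hm⟩

/-- The graph obtained from the cycle `C_m` (on the `Sum.inl` vertices) by adding two new
mutually nonadjacent vertices (the `Sum.inr` vertices), each adjacent to all `m` cycle
vertices. -/
def doubleWheel (m : ℕ) (hm : 0 < m) : SimpleGraph (Fin m ⊕ Fin 2) :=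
  SimpleGraph.fromEdgeSet
    ({e | ∃ i : Fin m, e = s(Sum.inl i, Sum.inl (nextFin hm i))} ∪
     {e | ∃ (i : Fin m) (j : Fin 2), e = s(Sum.inl i, Sum.inr j)})

/-! The cycle `0, 1, …, m-2, x, m-1, y` is Hamiltonian. The triangles `{i, i+1, apex}`, with apex
`x` for even `i` and `y` for odd `i`, use every rim edge once and, since `m` is even, every spoke
once. Even degrees then come for free: a triangle meets each vertex in 0 or 2 of its edges. -/
namespace SimpleGraph

variable {V W : Type*} [Fintype V] [Fintype W] [DecidableEq V] [DecidableEq W]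
  {G : SimpleGraph V} {H : SimpleGraph W}

lemma isHamiltonian_cycleGraph {n : ℕ} (hn : 3 ≤ n) : (cycleGraph n).IsHamiltonian := by
  obtain ⟨k, rfl⟩ : ∃ k, n = k + 3 := ⟨n - 3, by omega⟩
  exact fun _ => ⟨0, cycleGraph.cycle k,
    Walk.isHamiltonianCycle_iff_isCycle_and_length_eq.mpr ⟨cycleGraph.isCycle_cycle, by simp⟩⟩

lemma IsHamiltonian.of_hom_bijective (f : G →g H) (hf : Function.Bijective f)
    (hG : G.IsHamiltonian) : H.IsHamiltonian := fun hW => by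
  obtain ⟨a, p, hp⟩ := hG (by rwa [Fintype.card_of_bijective hf])
  exact ⟨f a, p.map f, hp.map hf⟩

lemma isHamiltonian_of_adj_succ {n : ℕ} (hn : 1 ≤ n) (f : Fin (n + 2) → V)
    (hf : Function.Bijective f) (hadj : ∀ k, G.Adj (f k) (f (k + 1))) : G.IsHamiltonian := by
  refine IsHamiltonian.of_hom_bijective ⟨f, fun {u v} huv => ?_⟩ hf
    (isHamiltonian_cycleGraph (n := n + 2) (by omega))
  rcases cycleGraph_adj.mp huv with h | h
  · rw [(sub_eq_iff_eq_add').mp h]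
    exact (hadj v).symm
  · rw [(sub_eq_iff_eq_add').mp h]
    exact hadj u

lemma ncard_neighborSet_eq_card_filter_edgeMS (G : SimpleGraph V) (v : V) :
    (G.neighborSet v).ncard = ((edgeMS G).filter (v ∈ ·)).card := by
  classical
  have : edgeMS G = G.edgeFinset.val := by
    simp [edgeMS, edgeFinset]
  rw [Set.ncard_eq_toFinset_card', ← neighborFinset_def, card_neighborFinset_eq_degree,
    ← card_incidenceFinset_eq_degree, incidenceFinset_eq_filter, this]
  rfl

end SimpleGraph

open SimpleGraph

lemma IsTriangle.even_card_filter_mem {V : Type*} [DecidableEq V] {t : Multiset (Sym2 V)}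
    (ht : IsTriangle t) (v : V) : Even (t.filter (v ∈ ·)).card := by
  obtain ⟨a, b, c, hab, hbc, hac, rfl⟩ := ht
  by_cases hva : v = a <;> by_cases hvb : v = b <;> by_cases hvc : v = c <;>
    simp_all [Multiset.filter_singleton]

lemma TriDecomp.even_card_filter_mem {V : Type*} [DecidableEq V] {E : Multiset (Sym2 V)}
    (hE : TriDecomp E) (v : V) : Even (E.filter (v ∈ ·)).card := by
  obtain ⟨T, hT, rfl⟩ := hE
  induction T using Multiset.induction_on with
  | empty => simp
  | cons t T ih =>
    rw [Multiset.sum_cons, Multiset.filter_add, Multiset.card_add]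
    exact (hT t (Multiset.mem_cons_self t T)).even_card_filter_mem v |>.add
      (ih fun t' ht' => hT t' (Multiset.mem_cons_of_mem ht'))

section DoubleWheel

variable {m : ℕ} (hm : 0 < m)

lemma val_nextFin (i : Fin m) :
    (nextFin hm i : ℕ) = if (i : ℕ) + 1 = m then 0 else (i : ℕ) + 1 := by
  simp only [nextFin]
  split_ifs with h
  · simp [h]
  · exact Nat.mod_eq_of_lt (by omega)

lemma nextFin_injective : Function.Injective (nextFin hm) := by
  intro a b h
  simp only [Fin.ext_iff, val_nextFin] at h ⊢
  split_ifs at h <;> omega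

lemma nextFin_ne_self (h2 : 2 ≤ m) (i : Fin m) : nextFin hm i ≠ i := by
  simp only [ne_eq, Fin.ext_iff, val_nextFin]
  split_ifs <;> omega

lemma nextFin_nextFin_ne_self (h3 : 3 ≤ m) (i : Fin m) : nextFin hm (nextFin hm i) ≠ i := by
  simp only [ne_eq, Fin.ext_iff, val_nextFin]
  split_ifs <;> omega

lemma ofNat_nextFin_ne (hme : Even m) (i : Fin m) :
    Fin.ofNat 2 (nextFin hm i) ≠ Fin.ofNat 2 i := by
  obtain ⟨t, rfl⟩ := hme
  simp only [ne_eq, Fin.ext_iff, Fin.val_ofNat, val_nextFin]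
  split_ifs <;> omega

def cycleEdge (i : Fin m) : Sym2 (Fin m ⊕ Fin 2) := s(.inl i, .inl (nextFin hm i))

def spokeEdge (q : Fin m × Fin 2) : Sym2 (Fin m ⊕ Fin 2) := s(.inl q.1, .inr q.2)

lemma mem_edgeSet_doubleWheel (h2 : 2 ≤ m) {e : Sym2 (Fin m ⊕ Fin 2)} :
    e ∈ (doubleWheel m hm).edgeSet ↔ (∃ i, cycleEdge hm i = e) ∨ ∃ q, spokeEdge q = e := by
  simp only [doubleWheel, edgeSet_fromEdgeSet, Set.mem_sdiff, Set.mem_union, Set.mem_ofPred_eq,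
    Sym2.mem_diagSet, cycleEdge, spokeEdge, Prod.exists]
  constructor
  · rintro ⟨⟨i, rfl⟩ | ⟨i, j, rfl⟩, -⟩
    exacts [Or.inl ⟨i, rfl⟩, Or.inr ⟨i, j, rfl⟩]
  · rintro (⟨i, rfl⟩ | ⟨i, j, rfl⟩)
    · exact ⟨Or.inl ⟨i, rfl⟩, by simpa using (nextFin_ne_self hm h2 i).symm⟩
    · exact ⟨Or.inr ⟨i, j, rfl⟩, by simp⟩

lemma doubleWheel_adj_nextFin (h2 : 2 ≤ m) (i : Fin m) :
    (doubleWheel m hm).Adj (.inl i) (.inl (nextFin hm i)) :=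
  (mem_edgeSet_doubleWheel hm h2).mpr (.inl ⟨i, rfl⟩)

lemma doubleWheel_adj_inl_succ (h2 : 2 ≤ m) {k : ℕ} (hk : k + 1 < m) :
    (doubleWheel m hm).Adj (.inl ⟨k, by omega⟩) (.inl ⟨k + 1, hk⟩) := by
  convert doubleWheel_adj_nextFin hm h2 ⟨k, by omega⟩
  simp only [val_nextFin]
  split_ifs <;> omega

lemma doubleWheel_adj_inl_inr (h2 : 2 ≤ m) (i : Fin m) (j : Fin 2) :
    (doubleWheel m hm).Adj (.inl i) (.inr j) :=
  (mem_edgeSet_doubleWheel hm h2).mpr (.inr ⟨(i, j), rfl⟩)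

lemma isHamiltonian_doubleWheel (h2 : 2 ≤ m) : (doubleWheel m hm).IsHamiltonian := by
  let f : Fin (m + 2) → Fin m ⊕ Fin 2 := fun k =>
    if h : k.val + 1 < m then .inl ⟨k, by omega⟩
    else if k.val + 1 = m then .inr 0
    else if k.val = m then .inl ⟨m - 1, by omega⟩
    else .inr 1
  refine isHamiltonian_of_adj_succ (n := m) (by omega) f ?_ fun k => ?_
  · refine (Fintype.bijective_iff_injective_and_card f).mpr ⟨fun a b hab => ?_, by simp⟩
    simp only [f] at hab
    split_ifs at hab <;> simp_all [Fin.ext_iff] <;> omega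
  · simp only [f, Fin.val_add_one, Fin.ext_iff, Fin.val_last]
    split_ifs <;> first
      | omega
      | exact doubleWheel_adj_inl_succ hm h2 ‹_›
      | exact doubleWheel_adj_inl_inr hm h2 _ _
      | exact (doubleWheel_adj_inl_inr hm h2 _ _).symm

lemma cycleEdge_injective (h3 : 3 ≤ m) : Function.Injective (cycleEdge hm) := by
  intro a b h
  rcases Sym2.eq_iff.mp h with ⟨hab, -⟩ | ⟨hab, hba⟩
  · exact Sum.inl_injective hab
  · have hb : nextFin hm (nextFin hm b) = b := by
      rw [← Sum.inl_injective hab, Sum.inl_injective hba]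
    exact absurd hb (nextFin_nextFin_ne_self hm h3 b)

lemma spokeEdge_injective : Function.Injective (spokeEdge (m := m)) := by
  rintro ⟨i, j⟩ ⟨i', j'⟩ h
  simpa [spokeEdge] using h

lemma edgeMS_doubleWheel (h3 : 3 ≤ m) :
    edgeMS (doubleWheel m hm) =
      Finset.univ.val.map (cycleEdge hm) + Finset.univ.val.map spokeEdge := by
  have hnodup : (Finset.univ.val.map (cycleEdge hm) + Finset.univ.val.map spokeEdge).Nodup := by
    refine Multiset.nodup_add.mpr ⟨Finset.univ.nodup.map (cycleEdge_injective hm h3),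
      Finset.univ.nodup.map spokeEdge_injective, Multiset.disjoint_left.mpr ?_⟩
    simp [cycleEdge, spokeEdge]
  refine (Multiset.Nodup.ext (Finset.nodup _) hnodup).mpr fun e => ?_
  simp [mem_edgeSet_doubleWheel hm (by omega : 2 ≤ m)]

lemma card_edgeMS_doubleWheel (h3 : 3 ≤ m) : (edgeMS (doubleWheel m hm)).card = 3 * m := by
  simp [edgeMS_doubleWheel hm h3]
  ring

def wheelTriangle (i : Fin m) : Multiset (Sym2 (Fin m ⊕ Fin 2)) :=
  {cycleEdge hm i, spokeEdge (nextFin hm i, Fin.ofNat 2 i), spokeEdge (i, Fin.ofNat 2 i)}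

lemma isTriangle_wheelTriangle (h2 : 2 ≤ m) (i : Fin m) : IsTriangle (wheelTriangle hm i) :=
  ⟨.inl i, .inl (nextFin hm i), .inr (Fin.ofNat 2 i),
    by simpa using (nextFin_ne_self hm h2 i).symm, by simp, by simp, rfl⟩

lemma spokes_eq_univ (hme : Even m) :
    Finset.univ.val.map (fun i : Fin m => (nextFin hm i, Fin.ofNat 2 i)) +
      Finset.univ.val.map (fun i : Fin m => (i, Fin.ofNat 2 i)) = Finset.univ.val := by
  have hnodup : (Finset.univ.val.map (fun i : Fin m => (nextFin hm i, Fin.ofNat 2 i)) +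
      Finset.univ.val.map (fun i : Fin m => (i, Fin.ofNat 2 i))).Nodup := by
    refine Multiset.nodup_add.mpr ⟨Finset.univ.nodup.map ?_, Finset.univ.nodup.map ?_,
      Multiset.disjoint_left.mpr ?_⟩
    · exact fun a b h => nextFin_injective hm (congrArg Prod.fst h)
    · exact fun a b h => congrArg Prod.fst h
    · simp only [Multiset.mem_map, Finset.mem_val, Finset.mem_univ, true_and, not_exists]
      rintro _ ⟨a, rfl⟩ b hb
      rw [Prod.mk.injEq] at hb
      exact ofNat_nextFin_ne hm hme a (hb.1 ▸ hb.2)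
  exact congrArg Finset.val (Finset.eq_univ_of_card ⟨_, hnodup⟩ (by simp; ring))

lemma triDecomp_doubleWheel (h3 : 3 ≤ m) (hme : Even m) :
    TriDecomp (edgeMS (doubleWheel m hm)) := by
  refine ⟨Finset.univ.val.map (wheelTriangle hm), ?_, ?_⟩
  · simpa using isTriangle_wheelTriangle hm (by omega)
  · have sum_map_singleton (f : Fin m → Sym2 (Fin m ⊕ Fin 2)) :
        (Finset.univ.val.map fun i => {f i}).sum = Finset.univ.val.map f := by
      rw [← Multiset.sum_map_singleton (Multiset.map f _), Multiset.map_map]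
      rfl
    unfold wheelTriangle
    simp only [Multiset.insert_eq_cons, ← Multiset.singleton_add, Multiset.sum_map_add,
      sum_map_singleton, edgeMS_doubleWheel hm h3, ← spokes_eq_univ hm hme,
      Multiset.map_add, Multiset.map_map, Function.comp_def]

end DoubleWheel

/-- For every even `m ≥ 4`, the cycle `C_m` plus two nonadjacent vertices joined to all
cycle vertices is a Hamiltonian, Eulerian (all degrees even) graph on `m + 2` vertices
with exactly `3m = 3(m+2) - 6` edges that is triangle decomposable. -/
theorem doubleWheel_hamiltonian_eulerian_triDecomp (m : ℕ) (hm : 4 ≤ m) (hme : Even m) :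
    Fintype.card (Fin m ⊕ Fin 2) = m + 2 ∧
    (doubleWheel m (by omega)).IsHamiltonian ∧
    (∀ v, Even (((doubleWheel m (by omega)).neighborSet v).ncard)) ∧
    (edgeMS (doubleWheel m (by omega))).card = 3 * m ∧
    3 * m = 3 * (m + 2) - 6 ∧
    TriDecomp (edgeMS (doubleWheel m (by omega))) := by
  have hdecomp := triDecomp_doubleWheel (by omega) (by omega) hme
  refine ⟨by simp, isHamiltonian_doubleWheel _ (by omega), fun v => ?_,
    card_edgeMS_doubleWheel _ (by omega), by omega, hdecomp⟩
  rw [ncard_neighborSet_eq_card_filter_edgeMS]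
  exact hdecomp.even_card_filter_mem v
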